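/- Let T be a radially symmetric proper infinite rooted tree with radially symmetric weight σ, taking the value σ_k on every edge of the shell S_k. Then Mod_{1,σ}(Γ_∞) ≥ inf_{k≥1} σ_k·|S_k|. -/

import Mathlib

open scoped ENNReal NNReal

/-- A proper infinite rooted tree, modeled as a prefix-closed set of finite lists of
naturals in which every node has at least one and finitely many children. -/
structure PTree where
  mem : List ℕ → Prop
  root_mem : mem []
  prefix_closed : ∀ ⦃l₁ l₂ : List ℕ⦄, l₁ <+: l₂ → mem l₂ → mem l₁
  child_exists : ∀ ⦃l⦄, mem l → ∃ a, mem (l ++ [a])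
  finite_children : ∀ ⦃l⦄, mem l → {a : ℕ | mem (l ++ [a])}.Finite

/-- The initial segment of length `n` of `f : ℕ → ℕ`, as a list. -/
def seg (f : ℕ → ℕ) (n : ℕ) : List ℕ := (List.range n).map f

namespace PTree

variable (T : PTree)

/-- The edges of the tree: the nonempty lists in `T`. -/
def Edge : Type := {e : List ℕ // T.mem e ∧ e ≠ []}

/-- The family `Γ_∞` of infinite descending paths: functions all of whose
finite initial segments lie in `T`. -/
def GammaInf : Set (ℕ → ℕ) := {f | ∀ n, T.mem (seg f n)}

/-- `ρ`-length of the infinite descending path determined by `f`: the sum of `ρ`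
over the nonempty initial segments of `f`. -/
noncomputable def lenInf (ρ : List ℕ → ℝ≥0) (f : ℕ → ℕ) : ℝ≥0∞ :=
  ∑' n : ℕ, (ρ (seg f (n + 1)) : ℝ≥0∞)

/-- `ρ`-length of the finite descending path `γ_e` consisting of the nonempty
prefixes of the edge `e`. -/
noncomputable def lenFin (ρ : List ℕ → ℝ≥0) (e : List ℕ) : ℝ≥0∞ :=
  ∑ k ∈ Finset.range e.length, (ρ (e.take (k + 1)) : ℝ≥0∞)

/-- Admissible densities for the family `Γ_n` (identified with the shell `S_n`). -/
def AdmFin (n : ℕ) : Set (List ℕ → ℝ≥0) :=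
  {ρ | ∀ e : List ℕ, T.mem e → e.length = n → 1 ≤ lenFin ρ e}

/-- Admissible densities for the family `Γ_∞`. -/
def AdmInf : Set (List ℕ → ℝ≥0) :=
  {ρ | ∀ f ∈ T.GammaInf, 1 ≤ lenInf ρ f}

/-- The `p`-energy of a density `ρ` with respect to the weight `σ`. -/
noncomputable def energy (p : ℝ) (σ ρ : List ℕ → ℝ≥0) : ℝ≥0∞ :=
  ∑' e : T.Edge, (σ e.1 : ℝ≥0∞) * (ρ e.1 : ℝ≥0∞) ^ p

/-- The `∞`-energy of a density `ρ` with respect to the weight `σ`. -/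
noncomputable def energyTop (σ ρ : List ℕ → ℝ≥0) : ℝ≥0∞ :=
  ⨆ e : T.Edge, (σ e.1 : ℝ≥0∞) * (ρ e.1 : ℝ≥0∞)

/-- The `p`-modulus of the family `Γ_n`. -/
noncomputable def ModFin (p : ℝ) (σ : List ℕ → ℝ≥0) (n : ℕ) : ℝ≥0∞ :=
  ⨅ ρ ∈ T.AdmFin n, T.energy p σ ρ

/-- The `p`-modulus of the family `Γ_∞`. -/
noncomputable def ModInf (p : ℝ) (σ : List ℕ → ℝ≥0) : ℝ≥0∞ :=
  ⨅ ρ ∈ T.AdmInf, T.energy p σ ρ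

/-- The `∞`-modulus of the family `Γ_∞`. -/
noncomputable def ModTop (σ : List ℕ → ℝ≥0) : ℝ≥0∞ :=
  ⨅ ρ ∈ T.AdmInf, T.energyTop σ ρ

end PTree

namespace PTree

/-- A tree is radially symmetric if the number of children of an edge depends
only on its generation. -/
def RadiallySymmetric (T : PTree) : Prop :=
  ∀ ⦃e e' : List ℕ⦄, T.mem e → T.mem e' → e.length = e'.length →
    Nat.card {a : ℕ // T.mem (e ++ [a])} = Nat.card {a : ℕ // T.mem (e' ++ [a])}

end PTree

/-!
Split a unit flow equally among the children at every vertex, so that `flow e` is the probability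
that the uniform random descending path passes through `e`. The expected `ρ`-length `W v` of that
path below `v` (`expectedLength`) is the average over the children `c` of `ρ c + W c`, so some
child does not increase `lenFin ρ v + W v`. Following such children gives an infinite path of
`ρ`-length at most `W [] = ∑ₑ ρ e * flow e`; hence this sum is at least `1` for every admissible
`ρ`, and `c ≤ Mod₁` whenever `c * flow e ≤ σ e` on all edges. In a radially symmetric tree the
flow is constant on each shell `S_k`, so it equals `1 / |S_k|` there, and `c = inf_k σ_k |S_k|`
qualifies.
-/

open Finset

lemma seg_succ (f : ℕ → ℕ) (n : ℕ) : seg f (n + 1) = seg f n ++ [f n] := by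
  simp [seg, List.range_succ]

lemma take_seg (f : ℕ → ℕ) {m n : ℕ} (h : m ≤ n) : (seg f n).take m = seg f m := by
  simp [seg, ← List.map_take, List.take_range, Nat.min_eq_left h]

lemma exists_forall_seg_of_forall_exists_append (P : List ℕ → Prop) (h₀ : P [])
    (h : ∀ v, P v → ∃ a, P (v ++ [a])) : ∃ f : ℕ → ℕ, ∀ n, P (seg f n) := by
  choose! next hnext using h
  let path : ℕ → List ℕ := fun n => Nat.rec [] (fun _ v => v ++ [next v]) n
  have hpath : ∀ n, P (path n) := fun n => by
    induction n with
    | zero => exact h₀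
    | succ n ih => exact hnext _ ih
  refine ⟨fun n => next (path n), fun n => ?_⟩
  suffices seg (fun n => next (path n)) n = path n from this ▸ hpath n
  induction n with
  | zero => rfl
  | succ n ih => rw [seg_succ, ih]

lemma ENNReal.exists_le_inv_natCard_mul_tsum {α : Type*} [Finite α] [Nonempty α]
    (f : α → ℝ≥0∞) : ∃ a, f a ≤ (Nat.card α : ℝ≥0∞)⁻¹ * ∑' a, f a := by
  have := Fintype.ofFinite α
  have hcard : (Nat.card α : ℝ≥0∞) ≠ 0 := by simp
  obtain ⟨a, -, ha⟩ := ENNReal.exists_le_of_sum_le (s := (univ : Finset α)) (f := f)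
    (g := fun _ => (Nat.card α : ℝ≥0∞)⁻¹ * ∑' a, f a) univ_nonempty <| le_of_eq <| by
      rw [sum_const, card_univ, nsmul_eq_mul, ← Nat.card_eq_fintype_card, ← mul_assoc,
        ENNReal.mul_inv_cancel hcard (ENNReal.natCast_ne_top _), one_mul, tsum_fintype]
  exact ⟨a, ha⟩

namespace PTree

lemma lenFin_append_singleton (ρ : List ℕ → ℝ≥0) (v : List ℕ) (a : ℕ) :
    lenFin ρ (v ++ [a]) = lenFin ρ v + ρ (v ++ [a]) := by
  rw [lenFin, lenFin, List.length_append, List.length_singleton, sum_range_succ,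
    List.take_of_length_le (by simp)]
  congr 1
  refine sum_congr rfl fun k hk => ?_
  rw [List.take_append_of_le_length (by simpa using hk)]

lemma lenFin_seg (ρ : List ℕ → ℝ≥0) (f : ℕ → ℕ) (n : ℕ) :
    lenFin ρ (seg f n) = ∑ k ∈ range n, (ρ (seg f (k + 1)) : ℝ≥0∞) := by
  rw [lenFin, show (seg f n).length = n by simp [seg]]
  exact sum_congr rfl fun k hk => by rw [take_seg f (by simpa using hk)]

lemma lenInf_eq_iSup_lenFin_seg (ρ : List ℕ → ℝ≥0) (f : ℕ → ℕ) :
    lenInf ρ f = ⨆ n, lenFin ρ (seg f n) := by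
  simp only [lenInf, lenFin_seg, ENNReal.tsum_eq_iSup_nat]

variable (T : PTree)

def children (v : List ℕ) : Set ℕ := {a | T.mem (v ++ [a])}

noncomputable def numChildren (v : List ℕ) : ℕ := Nat.card (T.children v)

def desc (v : List ℕ) : Set (List ℕ) := {e | T.mem e ∧ v <+: e}

def strictDesc (v : List ℕ) : Set (List ℕ) := {e | T.mem e ∧ v <+: e ∧ e ≠ v}

/-- The probability that the uniform random descending path through `v` (choosing each child
with equal probability) passes through `e`, for `v <+: e`. -/
noncomputable def branchProb (v e : List ℕ) : ℝ≥0∞ :=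
  ∏ k ∈ Ico v.length e.length, (T.numChildren (e.take k) : ℝ≥0∞)⁻¹

noncomputable def flow (e : List ℕ) : ℝ≥0∞ := T.branchProb [] e

noncomputable def expectedLength (ρ : List ℕ → ℝ≥0) (v : List ℕ) : ℝ≥0∞ :=
  ∑' e : T.strictDesc v, ρ e * T.branchProb v e

def shell (n : ℕ) : Set (List ℕ) := {e | T.mem e ∧ e.length = n}

def shellSuccEquiv (n : ℕ) : T.shell (n + 1) ≃ Σ v : T.shell n, T.children v where
  toFun e :=
    have hne : e.1 ≠ [] := List.ne_nil_of_length_pos (by simp [e.2.2])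
    ⟨⟨e.1.dropLast, T.prefix_closed (List.dropLast_prefix _) e.2.1, by simp [e.2.2]⟩,
      ⟨e.1.getLast hne, by simpa [children, List.dropLast_append_getLast hne] using e.2.1⟩⟩
  invFun p := ⟨p.1.1 ++ [p.2.1], p.2.2, by simp [p.1.2.2]⟩
  left_inv e := Subtype.ext (List.dropLast_append_getLast _)
  right_inv p := Sigma.subtype_ext (Subtype.ext (by simp)) (by simp)

variable {T}

lemma mem_of_mem_children {v : List ℕ} {a : ℕ} (ha : a ∈ T.children v) : T.mem v :=
  T.prefix_closed (List.prefix_append _ _) ha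

instance {v : List ℕ} : Finite (T.children v) := by
  by_cases hv : T.mem v
  · exact (T.finite_children hv).to_subtype
  · have : T.children v = ∅ := Set.eq_empty_of_forall_notMem fun a ha =>
      hv (mem_of_mem_children ha)
    rw [this]
    infer_instance

lemma natCard_children (v : List ℕ) : Nat.card (T.children v) = T.numChildren v := rfl

lemma nonempty_children {v : List ℕ} (hv : T.mem v) : (T.children v).Nonempty :=
  T.child_exists hv

lemma numChildren_ne_zero {v : List ℕ} (hv : T.mem v) : T.numChildren v ≠ 0 :=
  have := (nonempty_children hv).to_subtype
  Nat.card_ne_zero.mpr ⟨inferInstance, inferInstance⟩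

lemma branchProb_self (v : List ℕ) : T.branchProb v v = 1 := by
  simp [branchProb]

lemma branchProb_append_singleton (v : List ℕ) (a : ℕ) :
    T.branchProb v (v ++ [a]) = (T.numChildren v : ℝ≥0∞)⁻¹ := by
  simp [branchProb]

lemma branchProb_mul_branchProb {u v e : List ℕ} (huv : u <+: v) (hve : v <+: e) :
    T.branchProb u v * T.branchProb v e = T.branchProb u e := by
  rw [branchProb, branchProb, branchProb, ← prod_Ico_consecutive _ huv.length_le hve.length_le]
  congr 1
  refine prod_congr rfl fun k hk => ?_
  obtain ⟨t, rfl⟩ := hve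
  rw [List.take_append_of_le_length (mem_Ico.mp hk).2.le]

lemma strictDesc_eq_biUnion_desc (v : List ℕ) :
    T.strictDesc v = ⋃ a ∈ T.children v, T.desc (v ++ [a]) := by
  ext e
  simp only [strictDesc, desc, children, Set.mem_ofPred_eq, Set.mem_iUnion, exists_prop]
  constructor
  · rintro ⟨he, ⟨t, rfl⟩, hne⟩
    obtain ⟨a, t, rfl⟩ := List.exists_cons_of_ne_nil (by simpa using hne)
    exact ⟨a, T.prefix_closed (by simp) he, he, by simp⟩
  · rintro ⟨a, -, he, hae⟩
    refine ⟨he, (List.prefix_append v [a]).trans hae, fun hev => ?_⟩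
    simpa [hev] using hae.length_le

lemma pairwiseDisjoint_desc_append_singleton (v : List ℕ) :
    (T.children v).PairwiseDisjoint fun a => T.desc (v ++ [a]) := by
  intro a _ b _ hab
  refine Set.disjoint_left.mpr fun e hea heb => hab ?_
  have hab' : v ++ [a] = v ++ [b] := by
    rw [List.prefix_iff_eq_take.mp hea.2, List.prefix_iff_eq_take.mp heb.2]
    simp
  simpa using hab'

lemma desc_eq_union_strictDesc {v : List ℕ} (hv : T.mem v) :
    T.desc v = {v} ∪ T.strictDesc v := by
  ext e
  by_cases h : e = v
  · simp [desc, strictDesc, h, hv]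
  · simp [desc, strictDesc, h]

lemma tsum_desc_eq_add_expectedLength (ρ : List ℕ → ℝ≥0) {v : List ℕ} (hv : T.mem v) :
    ∑' e : T.desc v, (ρ e : ℝ≥0∞) * T.branchProb v e = ρ v + T.expectedLength ρ v := by
  have hv' : v ∉ T.strictDesc v := fun h => h.2.2 rfl
  rw [desc_eq_union_strictDesc hv, Summable.tsum_union_disjoint
    (f := fun e => (ρ e : ℝ≥0∞) * T.branchProb v e) (Set.disjoint_singleton_left.mpr hv')
    ENNReal.summable ENNReal.summable,
    tsum_singleton v fun e => (ρ e : ℝ≥0∞) * T.branchProb v e, branchProb_self, mul_one,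
    expectedLength]

lemma expectedLength_eq_inv_mul_tsum (ρ : List ℕ → ℝ≥0) (v : List ℕ) :
    T.expectedLength ρ v = (T.numChildren v : ℝ≥0∞)⁻¹ *
      ∑' a : T.children v, (ρ (v ++ [(a : ℕ)]) + T.expectedLength ρ (v ++ [(a : ℕ)])) := by
  have hprob (a : T.children v) (e : T.desc (v ++ [(a : ℕ)])) :
      T.branchProb v e = (T.numChildren v : ℝ≥0∞)⁻¹ * T.branchProb (v ++ [(a : ℕ)]) e := by
    rw [← branchProb_append_singleton v (a : ℕ),
      branchProb_mul_branchProb (List.prefix_append _ _) e.2.2]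
  rw [expectedLength, strictDesc_eq_biUnion_desc,
    ENNReal.tsum_biUnion' (f := fun e => (ρ e : ℝ≥0∞) * T.branchProb v e)
      (pairwiseDisjoint_desc_append_singleton v), ← ENNReal.tsum_mul_left]
  refine tsum_congr fun a => ?_
  simp only [hprob a, mul_left_comm _ (T.numChildren v : ℝ≥0∞)⁻¹]
  rw [ENNReal.tsum_mul_left, tsum_desc_eq_add_expectedLength ρ a.2]

lemma exists_child_add_expectedLength_le (ρ : List ℕ → ℝ≥0) {v : List ℕ} (hv : T.mem v) :
    ∃ a, T.mem (v ++ [a]) ∧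
      ρ (v ++ [a]) + T.expectedLength ρ (v ++ [a]) ≤ T.expectedLength ρ v := by
  have := (nonempty_children hv).to_subtype
  obtain ⟨a, ha⟩ := ENNReal.exists_le_inv_natCard_mul_tsum
    fun a : T.children v => (ρ (v ++ [(a : ℕ)]) : ℝ≥0∞) + T.expectedLength ρ (v ++ [(a : ℕ)])
  exact ⟨a, a.2, (expectedLength_eq_inv_mul_tsum ρ v).symm ▸ ha⟩

lemma exists_mem_gammaInf_lenInf_le (ρ : List ℕ → ℝ≥0) :
    ∃ f ∈ T.GammaInf, lenInf ρ f ≤ T.expectedLength ρ [] := by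
  obtain ⟨f, hf⟩ := exists_forall_seg_of_forall_exists_append
    (fun v => T.mem v ∧ lenFin ρ v + T.expectedLength ρ v ≤ T.expectedLength ρ [])
    ⟨T.root_mem, by simp [lenFin]⟩ fun v ⟨hv, hlen⟩ => by
      obtain ⟨a, ha, hle⟩ := exists_child_add_expectedLength_le ρ hv
      refine ⟨a, ha, le_trans ?_ hlen⟩
      rw [lenFin_append_singleton, add_assoc]
      gcongr
  refine ⟨f, fun n => (hf n).1, ?_⟩
  rw [lenInf_eq_iSup_lenFin_seg]
  exact iSup_le fun n => le_trans le_self_add (hf n).2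

lemma one_le_expectedLength_nil {ρ : List ℕ → ℝ≥0} (hρ : ρ ∈ T.AdmInf) :
    1 ≤ T.expectedLength ρ [] :=
  let ⟨f, hf, hle⟩ := exists_mem_gammaInf_lenInf_le ρ
  (hρ f hf).trans hle

lemma expectedLength_nil (ρ : List ℕ → ℝ≥0) :
    T.expectedLength ρ [] = ∑' e : T.Edge, ρ e.1 * T.flow e.1 :=
  let toEdge : T.strictDesc [] ≃ T.Edge := Equiv.subtypeEquivRight fun e => by simp [strictDesc]
  toEdge.tsum_eq fun e => (ρ e.1 : ℝ≥0∞) * T.flow e.1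

lemma le_modInf_one_of_forall_mul_flow_le {σ : List ℕ → ℝ≥0} {c : ℝ≥0∞}
    (h : ∀ e : T.Edge, c * T.flow e.1 ≤ σ e.1) : c ≤ T.ModInf 1 σ := by
  refine le_iInf₂ fun ρ hρ => ?_
  calc c ≤ c * T.expectedLength ρ [] := le_mul_of_one_le_right' (one_le_expectedLength_nil hρ)
    _ = ∑' e : T.Edge, c * T.flow e.1 * ρ e.1 := by
      rw [expectedLength_nil, ← ENNReal.tsum_mul_left]
      simp only [mul_comm, mul_left_comm]
    _ ≤ T.energy 1 σ ρ := by
      simp only [energy, ENNReal.rpow_one]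
      exact ENNReal.tsum_le_tsum fun e => by gcongr; exact h e

instance (n : ℕ) : Finite (T.shell n) := by
  induction n with
  | zero =>
    refine Set.Finite.to_subtype ((Set.finite_singleton []).subset fun e he => ?_)
    simpa [shell] using he.2
  | succ n ih => exact Finite.of_equiv _ (T.shellSuccEquiv n).symm

lemma flow_append_singleton (v : List ℕ) (a : ℕ) :
    T.flow (v ++ [a]) = T.flow v * (T.numChildren v : ℝ≥0∞)⁻¹ := by
  rw [flow, flow, ← branchProb_append_singleton v a,
    branchProb_mul_branchProb List.nil_prefix (List.prefix_append _ _)]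

lemma tsum_shell_flow (n : ℕ) : ∑' e : T.shell n, T.flow e = 1 := by
  induction n with
  | zero =>
    have : T.shell 0 = {[]} := by
      ext e
      simp only [shell, Set.mem_ofPred_eq, List.length_eq_zero_iff, Set.mem_singleton_iff]
      exact ⟨And.right, fun h => ⟨h ▸ T.root_mem, h⟩⟩
    rw [this, tsum_singleton [] T.flow, flow, branchProb_self]
  | succ n ih =>
    rw [← ih, ← (T.shellSuccEquiv n).symm.tsum_eq, ENNReal.tsum_sigma']
    refine tsum_congr fun v => ?_
    have := (nonempty_children v.2.1).to_subtype
    simp only [shellSuccEquiv, Equiv.coe_fn_symm_mk, flow_append_singleton, ENNReal.tsum_const,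
      ENat.card_eq_coe_natCard, ENat.toENNReal_coe, natCard_children]
    rw [mul_left_comm, ENNReal.mul_inv_cancel (Nat.cast_ne_zero.mpr (numChildren_ne_zero v.2.1))
      (ENNReal.natCast_ne_top _), mul_one]

lemma flow_eq_of_radiallySymmetric (hT : T.RadiallySymmetric) {n : ℕ} {e e' : List ℕ}
    (he : e ∈ T.shell n) (he' : e' ∈ T.shell n) : T.flow e = T.flow e' := by
  rw [flow, flow, branchProb, branchProb, he.2, he'.2]
  refine prod_congr rfl fun k _ => ?_
  exact congrArg (fun m : ℕ => (m : ℝ≥0∞)⁻¹) (hT (T.prefix_closed (List.take_prefix k e) he.1)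
    (T.prefix_closed (List.take_prefix k e') he'.1) (by simp [he.2, he'.2]))

lemma natCard_shell_mul_flow (hT : T.RadiallySymmetric) {n : ℕ} {e : List ℕ}
    (he : e ∈ T.shell n) : (Nat.card (T.shell n) : ℝ≥0∞) * T.flow e = 1 := by
  rw [← tsum_shell_flow n, ← ENat.toENNReal_coe, ← ENat.card_eq_coe_natCard, ← ENNReal.tsum_const]
  exact tsum_congr fun e' => flow_eq_of_radiallySymmetric hT he e'.2

end PTree

theorem stmt8_general (T : PTree) (hT : T.RadiallySymmetric)
    (σs : ℕ → ℝ≥0) :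
    (⨅ k : ℕ, (σs (k + 1) : ℝ≥0∞) *
        (Nat.card {e : List ℕ // T.mem e ∧ e.length = k + 1} : ℝ≥0∞))
      ≤ T.ModInf 1 (fun l => σs l.length) := by
  refine PTree.le_modInf_one_of_forall_mul_flow_le fun e => ?_
  obtain ⟨k, hk⟩ : ∃ k, e.1.length = k + 1 :=
    Nat.exists_eq_succ_of_ne_zero (by simpa using e.2.2)
  have he : e.1 ∈ T.shell (k + 1) := ⟨e.2.1, hk⟩
  calc _ ≤ (σs (k + 1) * Nat.card (T.shell (k + 1)) : ℝ≥0∞) * T.flow e.1 := by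
        gcongr
        exact iInf_le (fun k => (σs (k + 1) : ℝ≥0∞) * Nat.card (T.shell (k + 1))) k
    _ = σs e.1.length := by rw [mul_assoc, PTree.natCard_shell_mul_flow hT he, mul_one, hk]

/-- for a radially symmetric tree with radially symmetric weight
(with value `σs k` on the shell `S_k`), `Mod_{1,σ}(Γ_∞) ≥ inf_{k ≥ 1} σs k * |S_k|`. -/
theorem stmt8 (T : PTree) (hT : T.RadiallySymmetric)
    (σs : ℕ → ℝ≥0) (hσ : ∀ n, 0 < σs n) :
    (⨅ k : ℕ, (σs (k + 1) : ℝ≥0∞) *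
        (Nat.card {e : List ℕ // T.mem e ∧ e.length = k + 1} : ℝ≥0∞))
      ≤ T.ModInf 1 (fun l => σs l.length) :=
  stmt8_general T hT σs
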